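/- Every law-invariant monetary risk measure ρ on L^∞(P) over a nonatomic probability space admits the representation ρ(X) = min over Z ∈ 𝒜_ρ of sup over t ∈ (0,1) of (VaR_t(X) − VaR_t(Z)), with the minimum attained at Z = X + ρ(X). -/

import Mathlib

/-!
Translation invariance gives `q_{X+c} = q_X + c`, so `VaR_t(X) − VaR_t(X + c) = c` for every
`t ∈ (0,1)`; with `c = ρ(X)` the candidate `Z = X + ρ(X)` is acceptable and attains `ρ(X)`.
Conversely, if `Z` is acceptable and `r = sup_t (VaR_t(X) − VaR_t(Z))`, then `q_Z ≤ q_{X+r}` on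
`(0,1)`. Evaluating both upper quantile functions at the uniform variable `U` produces copies of
`X + r` and `Z` with the same laws that are ordered pointwise, so monotonicity and law invariance
give `ρ(X) − r = ρ(X + r) ≤ ρ(Z) ≤ 0`.
-/

open MeasureTheory ProbabilityTheory Filter Set

/-- `X` belongs to `L^∞(P)`: measurable and essentially bounded. -/
def MemLinf {Ω : Type*} [MeasurableSpace Ω] (P : Measure Ω) (X : Ω → ℝ) : Prop :=
  Measurable X ∧ ∃ C : ℝ, ∀ᵐ ω ∂P, |X ω| ≤ C

/-- The upper quantile function `q_X(t) = inf {x : F_X(x) > t}` of `X` under `P`. -/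
noncomputable def uq {Ω : Type*} [MeasurableSpace Ω] (P : Measure Ω)
    (X : Ω → ℝ) (t : ℝ) : ℝ :=
  sInf {x : ℝ | t < cdf (P.map X) x}

/-- `VaR_t(X) = −q_X(t)`. -/
noncomputable def VaR {Ω : Type*} [MeasurableSpace Ω] (P : Measure Ω)
    (X : Ω → ℝ) (t : ℝ) : ℝ :=
  - uq P X t

open scoped Topology

noncomputable def upperQuantile (μ : Measure ℝ) (t : ℝ) : ℝ :=
  sInf {x : ℝ | t < cdf μ x}

section upperQuantile

variable {μ : Measure ℝ} {t x : ℝ}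

lemma exists_lt_cdf (ht : t < 1) : ∃ x, t < cdf μ x :=
  ((tendsto_cdf_atTop μ).eventually (lt_mem_nhds ht)).exists

lemma bddBelow_setOf_lt_cdf (ht : 0 < t) : BddBelow {x | t < cdf μ x} := by
  obtain ⟨a, ha⟩ := ((tendsto_cdf_atBot μ).eventually (gt_mem_nhds ht)).exists_forall_of_atBot
  exact ⟨a, fun x hx => le_of_not_ge fun hxa => (ha x hxa).not_gt hx⟩

lemma upperQuantile_le_of_lt_cdf (ht : 0 < t) (h : t < cdf μ x) : upperQuantile μ t ≤ x :=
  csInf_le (bddBelow_setOf_lt_cdf ht) h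

lemma le_upperQuantile_of_cdf_le (ht : t < 1) (h : cdf μ x ≤ t) : x ≤ upperQuantile μ t :=
  le_csInf (exists_lt_cdf ht) fun _ hy => ((monotone_cdf μ).reflect_lt (h.trans_lt hy)).le

lemma le_cdf_of_upperQuantile_le (ht : t < 1) (h : upperQuantile μ t ≤ x) : t ≤ cdf μ x := by
  by_contra! hx
  have hright : ∀ᶠ y in 𝓝[>] x, cdf μ y < t :=
    ((cdf μ).right_continuous x |>.eventually (gt_mem_nhds hx)).filter_mono
      (nhdsWithin_mono x Ioi_subset_Ici_self)
  obtain ⟨y, hyt, hxy⟩ := (hright.and self_mem_nhdsWithin).exists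
  exact (le_upperQuantile_of_cdf_le ht hyt.le |>.trans h).not_gt hxy

lemma monotoneOn_upperQuantile : MonotoneOn (upperQuantile μ) (Ioo 0 1) :=
  fun _ ha _ hb hab =>
    csInf_le_csInf (bddBelow_setOf_lt_cdf ha.1) (exists_lt_cdf hb.2) fun _ hx => hab.trans_lt hx

lemma upperQuantile_of_neg (ht : t < 0) : upperQuantile μ t = 0 := by
  have : {x | t < cdf μ x} = univ := eq_univ_of_forall fun x => ht.trans_le (cdf_nonneg μ x)
  rw [upperQuantile, this, Real.sInf_of_not_bddBelow not_bddBelow_univ]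

lemma upperQuantile_of_one_le (ht : 1 ≤ t) : upperQuantile μ t = 0 := by
  have : {x | t < cdf μ x} = ∅ := eq_empty_of_forall_notMem fun x hx =>
    (cdf_le_one μ x).not_gt (ht.trans_lt hx)
  rw [upperQuantile, this, Real.sInf_empty]

lemma measurable_upperQuantile : Measurable (upperQuantile μ) := by
  refine measurable_of_restrict_of_restrict_compl (s := Ioo 0 1) measurableSet_Ioo ?_ ?_
  · exact Monotone.measurable fun a b hab => monotoneOn_upperQuantile a.2 b.2 hab
  · have : (Ioo 0 1)ᶜ.domRestrict (upperQuantile μ) =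
        fun a : ((Ioo 0 1)ᶜ : Set ℝ) => if (a : ℝ) = 0 then upperQuantile μ 0 else 0 := by
      ext ⟨a, ha⟩
      rcases lt_trichotomy a 0 with h | rfl | h
      · simp [upperQuantile_of_neg h, h.ne]
      · simp
      · simp [upperQuantile_of_one_le (not_lt.1 fun h1 => ha ⟨h, h1⟩), h.ne']
    rw [this]
    exact Measurable.ite ((measurableSet_singleton 0).preimage measurable_subtype_coe)
      measurable_const measurable_const

end upperQuantile

section probability

variable {μ : Measure ℝ} [IsProbabilityMeasure μ] {t : ℝ}

lemma map_upperQuantile_uniform :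
    (volume.restrict (Ioo (0 : ℝ) 1)).map (upperQuantile μ) = μ := by
  have : IsFiniteMeasure (volume.restrict (Ioo (0 : ℝ) 1)) :=
    isFiniteMeasure_restrict.2 measure_Ioo_lt_top.ne
  refine Measure.ext_of_Iic _ _ fun x => ?_
  rw [Measure.map_apply measurable_upperQuantile measurableSet_Iic,
    Measure.restrict_apply (measurable_upperQuantile measurableSet_Iic), ← ofReal_cdf]
  have hinner : Ioo 0 (cdf μ x) ⊆ upperQuantile μ ⁻¹' Iic x ∩ Ioo 0 1 := fun t ht =>
    ⟨upperQuantile_le_of_lt_cdf ht.1 ht.2, ht.1, ht.2.trans_le (cdf_le_one μ x)⟩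
  have houter : upperQuantile μ ⁻¹' Iic x ∩ Ioo 0 1 ⊆ Ioc 0 (cdf μ x) := fun t ht =>
    ⟨ht.2.1, le_cdf_of_upperQuantile_le ht.2.2 ht.1⟩
  refine le_antisymm ?_ ?_
  · simpa using measure_mono (μ := volume) houter
  · simpa using measure_mono (μ := volume) hinner

lemma cdf_map_add_const (m x : ℝ) : cdf (μ.map (· + m)) x = cdf μ (x - m) := by
  have := Measure.isProbabilityMeasure_map (μ := μ) (measurable_add_const m).aemeasurable
  rw [cdf_eq_real, cdf_eq_real, measureReal_def, measureReal_def,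
    Measure.map_apply (measurable_add_const m) measurableSet_Iic, preimage_add_const_Iic]

lemma upperQuantile_map_add_const (m : ℝ) (ht : t ∈ Ioo 0 1) :
    upperQuantile (μ.map (· + m)) t = upperQuantile μ t + m := by
  have hshift : {x | t < cdf (μ.map (· + m)) x} = OrderIso.addRight m '' {x | t < cdf μ x} := by
    ext x
    simp [cdf_map_add_const, sub_eq_add_neg]
  rw [upperQuantile, hshift]
  exact ((OrderIso.addRight m).map_csInf' (exists_lt_cdf ht.2) (bddBelow_setOf_lt_cdf ht.1)).symm

lemma abs_upperQuantile_le {C : ℝ} (hC : ∀ᵐ x ∂μ, |x| ≤ C) (ht : t ∈ Ioo 0 1) :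
    |upperQuantile μ t| ≤ C := by
  refine abs_le.2 ⟨le_csInf (exists_lt_cdf ht.2) fun y hy => ?_, ?_⟩
  · by_contra! hyC
    have hnull : μ (Iic y) = 0 := measure_mono_null
      (fun x (hx : x ≤ y) => not_le.2 (by linarith [neg_le_abs x])) (ae_iff.1 hC)
    have hy0 : cdf μ y = 0 := by rw [cdf_eq_real, measureReal_def, hnull, ENNReal.toReal_zero]
    exact (ht.1.trans hy).ne' hy0
  · have hnull : μ (Iic C)ᶜ = 0 := measure_mono_null
      (fun x (hx : ¬x ≤ C) => not_le.2 ((not_le.1 hx).trans_le (le_abs_self x))) (ae_iff.1 hC)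
    refine upperQuantile_le_of_lt_cdf ht.1 ?_
    rw [cdf_eq_real, measureReal_def, (prob_compl_eq_zero_iff measurableSet_Iic).1 hnull]
    simpa using ht.2

end probability

section randomVariable

variable {Ω : Type*} [MeasurableSpace Ω] {P : Measure Ω} {X Z U : Ω → ℝ}

lemma uq_eq_upperQuantile : uq P X = upperQuantile (P.map X) := rfl

lemma MemLinf.add_const (hX : MemLinf P X) (m : ℝ) : MemLinf P (fun ω => X ω + m) := by
  obtain ⟨hXm, C, hC⟩ := hX
  exact ⟨hXm.add_const m, C + |m|, hC.mono fun ω hω => (abs_add_le _ _).trans (by linarith)⟩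

lemma ae_mem_Ioo_of_map_eq (hU : Measurable U) (hUd : P.map U = volume.restrict (Ioo (0 : ℝ) 1)) :
    ∀ᵐ ω ∂P, U ω ∈ Ioo (0 : ℝ) 1 :=
  ae_of_ae_map hU.aemeasurable (hUd ▸ ae_restrict_mem measurableSet_Ioo)

variable [IsProbabilityMeasure P]

lemma MemLinf.exists_abs_uq_le (hX : MemLinf P X) : ∃ C, ∀ t ∈ Ioo (0 : ℝ) 1, |uq P X t| ≤ C := by
  obtain ⟨hXm, C, hC⟩ := hX
  have := Measure.isProbabilityMeasure_map (μ := P) hXm.aemeasurable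
  have hCmap : ∀ᵐ x ∂P.map X, |x| ≤ C :=
    (ae_map_iff hXm.aemeasurable (measurableSet_le continuous_abs.measurable measurable_const)).2 hC
  exact ⟨C, fun t ht => abs_upperQuantile_le hCmap ht⟩

lemma uq_add_const (hX : Measurable X) (m : ℝ) {t : ℝ} (ht : t ∈ Ioo (0 : ℝ) 1) :
    uq P (fun ω => X ω + m) t = uq P X t + m := by
  have := Measure.isProbabilityMeasure_map (μ := P) hX.aemeasurable
  rw [uq_eq_upperQuantile, uq_eq_upperQuantile, ← upperQuantile_map_add_const m ht,
    Measure.map_map (measurable_add_const m) hX]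
  rfl

lemma sSup_VaR_sub_VaR_add_const (hX : Measurable X) (m : ℝ) :
    sSup {s : ℝ | ∃ t ∈ Ioo (0 : ℝ) 1, s = VaR P X t - VaR P (fun ω => X ω + m) t} = m := by
  have hconst : ∀ t ∈ Ioo (0 : ℝ) 1, VaR P X t - VaR P (fun ω => X ω + m) t = m := fun t ht => by
    simp only [VaR, uq_add_const hX m ht]
    ring
  have hset : {s : ℝ | ∃ t ∈ Ioo (0 : ℝ) 1, s = VaR P X t - VaR P (fun ω => X ω + m) t} = {m} := by
    ext s
    constructor
    · rintro ⟨t, ht, rfl⟩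
      exact hconst t ht
    · rintro rfl
      exact ⟨1 / 2, by norm_num, (hconst _ (by norm_num)).symm⟩
  rw [hset, csSup_singleton]

lemma bddAbove_VaR_sub (hX : MemLinf P X) (hZ : MemLinf P Z) :
    BddAbove {s : ℝ | ∃ t ∈ Ioo (0 : ℝ) 1, s = VaR P X t - VaR P Z t} := by
  obtain ⟨C, hC⟩ := hX.exists_abs_uq_le
  obtain ⟨D, hD⟩ := hZ.exists_abs_uq_le
  refine ⟨D + C, ?_⟩
  rintro _ ⟨t, ht, rfl⟩
  have := abs_le.1 (hC t ht)
  have := abs_le.1 (hD t ht)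
  simp only [VaR]
  linarith

lemma map_uq_comp (hU : Measurable U) (hUd : P.map U = volume.restrict (Ioo (0 : ℝ) 1))
    (hX : Measurable X) : P.map (fun ω => uq P X (U ω)) = P.map X := by
  have := Measure.isProbabilityMeasure_map (μ := P) hX.aemeasurable
  change P.map (upperQuantile (P.map X) ∘ U) = _
  rw [← Measure.map_map measurable_upperQuantile hU, hUd, map_upperQuantile_uniform]

lemma MemLinf.uq_comp (hU : Measurable U) (hUd : P.map U = volume.restrict (Ioo (0 : ℝ) 1))
    (hX : MemLinf P X) : MemLinf P (fun ω => uq P X (U ω)) := by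
  obtain ⟨C, hC⟩ := hX.exists_abs_uq_le
  exact ⟨measurable_upperQuantile.comp hU, C,
    (ae_mem_Ioo_of_map_eq hU hUd).mono fun ω hω => hC _ hω⟩

end randomVariable

lemma le_of_forall_uq_le {Ω : Type*} [MeasurableSpace Ω] {P : Measure Ω} [IsProbabilityMeasure P]
    {U : Ω → ℝ} (hU : Measurable U) (hUd : P.map U = volume.restrict (Ioo (0 : ℝ) 1))
    {ρ : (Ω → ℝ) → ℝ}
    (hmono : ∀ X Y : Ω → ℝ, MemLinf P X → MemLinf P Y →
      (∀ᵐ ω ∂P, X ω ≤ Y ω) → ρ Y ≤ ρ X)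
    (hLI : ∀ X Y : Ω → ℝ, MemLinf P X → MemLinf P Y → P.map X = P.map Y → ρ X = ρ Y)
    {Y Z : Ω → ℝ} (hY : MemLinf P Y) (hZ : MemLinf P Z)
    (h : ∀ t ∈ Ioo (0 : ℝ) 1, uq P Z t ≤ uq P Y t) : ρ Y ≤ ρ Z :=
  calc ρ Y = ρ (fun ω => uq P Y (U ω)) :=
        hLI _ _ hY (hY.uq_comp hU hUd) (map_uq_comp hU hUd hY.1).symm
    _ ≤ ρ (fun ω => uq P Z (U ω)) := hmono _ _ (hZ.uq_comp hU hUd) (hY.uq_comp hU hUd)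
        ((ae_mem_Ioo_of_map_eq hU hUd).mono fun ω => h (U ω))
    _ = ρ Z := hLI _ _ (hZ.uq_comp hU hUd) hZ (map_uq_comp hU hUd hZ.1)

/-- Every law-invariant monetary risk measure `ρ` on a nonatomic space admits the
representation `ρ(X) = min_{Z ∈ 𝒜_ρ} sup_{t ∈ (0,1)} (VaR_t(X) − VaR_t(Z))`, with the
minimum attained at `Z = X + ρ(X)`. -/
theorem stmt14 {Ω : Type*} [MeasurableSpace Ω] (P : Measure Ω) [IsProbabilityMeasure P]
    (U : Ω → ℝ) (hU : Measurable U)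
    (hUd : P.map U = volume.restrict (Ioo (0 : ℝ) 1))
    (ρ : (Ω → ℝ) → ℝ)
    (hmono : ∀ X Y : Ω → ℝ, MemLinf P X → MemLinf P Y →
      (∀ᵐ ω ∂P, X ω ≤ Y ω) → ρ Y ≤ ρ X)
    (hTI : ∀ X : Ω → ℝ, MemLinf P X → ∀ m : ℝ, ρ (fun ω => X ω + m) = ρ X - m)
    (hLI : ∀ X Y : Ω → ℝ, MemLinf P X → MemLinf P Y → P.map X = P.map Y → ρ X = ρ Y)
    (X : Ω → ℝ) (hX : MemLinf P X) :
    IsLeast {r : ℝ | ∃ Z : Ω → ℝ, MemLinf P Z ∧ ρ Z ≤ 0 ∧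
        r = sSup {s : ℝ | ∃ t ∈ Ioo (0 : ℝ) 1, s = VaR P X t - VaR P Z t}} (ρ X)
    ∧ ρ (fun ω => X ω + ρ X) ≤ 0
    ∧ ρ X = sSup {s : ℝ | ∃ t ∈ Ioo (0 : ℝ) 1,
        s = VaR P X t - VaR P (fun ω => X ω + ρ X) t} := by
  have hacc : ρ (fun ω => X ω + ρ X) ≤ 0 := by rw [hTI X hX, sub_self]
  have hrepr := (sSup_VaR_sub_VaR_add_const (P := P) hX.1 (ρ X)).symm
  refine ⟨⟨⟨_, hX.add_const _, hacc, hrepr⟩, ?_⟩, hacc, hrepr⟩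
  rintro _ ⟨Z, hZ, hρZ, rfl⟩
  set r := sSup {s : ℝ | ∃ t ∈ Ioo (0 : ℝ) 1, s = VaR P X t - VaR P Z t}
  have hdom : ∀ t ∈ Ioo (0 : ℝ) 1, uq P Z t ≤ uq P (fun ω => X ω + r) t := fun t ht => by
    have hle : VaR P X t - VaR P Z t ≤ r := le_csSup (bddAbove_VaR_sub hX hZ) ⟨t, ht, rfl⟩
    rw [uq_add_const hX.1 r ht]
    simp only [VaR] at hle
    linarith
  have := le_of_forall_uq_le hU hUd hmono hLI (hX.add_const r) hZ hdom
  rw [hTI X hX r] at this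
  linarith
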